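/- arXiv:2312.13811 — 2 statements merged into one kernel-verified Lean document; each statement's English description precedes it below -/
import Mathlib

section
/- Define recursively the matrices Σ₁ = I₂ ∈ M₂(ℝ) and Σ_{n+1} = block-diagonal(J_n + Σ_n, J_n + Σ_n) ∈ M_{2^{n+1}}(ℝ), where J_n ∈ M_{2^n}(ℝ) is the all-ones matrix. Then det Σ_n = (2^n - 1) · ∏_{k=0}^{n-1} (2^{n-k} - 1)^{2^k}. -/
open Matrix Finset

/-- The equivalence `Fin (2^n) ⊕ Fin (2^n) ≃ Fin (2^(n+1))` used to view a block-diagonal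
matrix of two `2^n × 2^n` blocks as a `2^(n+1) × 2^(n+1)` matrix. -/
noncomputable def blockEquiv (n : ℕ) : Fin (2 ^ n) ⊕ Fin (2 ^ n) ≃ Fin (2 ^ (n + 1)) :=
  finSumFinEquiv.trans (finCongr (by rw [pow_succ, mul_two]))

/-- The all-ones matrix `J_n`. -/
def allOnes (n : ℕ) : Matrix (Fin (2 ^ n)) (Fin (2 ^ n)) ℝ := Matrix.of fun _ _ => 1

/-- Product appearing in the determinant formula. -/
noncomputable def prodC (n : ℕ) : ℝ :=
  ∏ k ∈ Finset.range n, ((2 : ℝ) ^ (n - k) - 1) ^ (2 ^ k)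

lemma prodC_succ (n : ℕ) : prodC (n + 1) = ((2 : ℝ) ^ (n + 1) - 1) * (prodC n) ^ 2 := by
  unfold prodC
  rw [Finset.prod_range_succ']
  have h : ∀ k ∈ Finset.range n,
      ((2 : ℝ) ^ (n + 1 - (k + 1)) - 1) ^ (2 ^ (k + 1)) =
      (((2 : ℝ) ^ (n - k) - 1) ^ (2 ^ k)) ^ 2 := by
    intro k _
    rw [Nat.succ_sub_succ, pow_succ, pow_mul]
  rw [Finset.prod_congr rfl h, ← Finset.prod_pow, Nat.sub_zero, pow_zero, pow_one, mul_comm]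

lemma det_fromBlocks_sym {m : Type*} [Fintype m] [DecidableEq m] (A C : Matrix m m ℝ) :
    (Matrix.fromBlocks A C C A).det = (A - C).det * (A + C).det := by
  have key : Matrix.fromBlocks (1 : Matrix m m ℝ) 0 1 1 * Matrix.fromBlocks A C C A *
      Matrix.fromBlocks (1 : Matrix m m ℝ) 0 (-1) 1 =
      Matrix.fromBlocks (A - C) C 0 (A + C) := by
    simp [Matrix.fromBlocks_multiply]
    constructor
    · abel
    · constructor
      · abel
      · abel
  have hd := congrArg Matrix.det key
  rw [Matrix.det_mul, Matrix.det_mul, Matrix.det_fromBlocks_zero₁₂,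
    Matrix.det_fromBlocks_zero₁₂, Matrix.det_fromBlocks_zero₂₁] at hd
  simpa using hd

lemma allOnes_succ (n : ℕ) :
    allOnes (n + 1) = (Matrix.reindex (blockEquiv n) (blockEquiv n))
      (Matrix.fromBlocks (allOnes n) (allOnes n) (allOnes n) (allOnes n)) := by
  ext i j
  rw [Matrix.reindex_apply, Matrix.submatrix_apply]
  rcases (blockEquiv n).symm i with x | x <;> rcases (blockEquiv n).symm j with y | y <;> rfl

theorem stmt_3 (S : ∀ n : ℕ, Matrix (Fin (2 ^ n)) (Fin (2 ^ n)) ℝ)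
    (h1 : S 1 = 1)
    (hrec : ∀ n : ℕ, 1 ≤ n →
      S (n + 1) = (Matrix.reindex (blockEquiv n) (blockEquiv n))
        (Matrix.fromBlocks (allOnes n + S n) 0 0 (allOnes n + S n))) :
    ∀ n : ℕ, 1 ≤ n →
      (S n).det = ((2 : ℝ) ^ n - 1) * ∏ k ∈ Finset.range n, ((2 : ℝ) ^ (n - k) - 1) ^ (2 ^ k) := by
  have key : ∀ n : ℕ, 1 ≤ n → ∀ a : ℝ,
      (S n + a • allOnes n).det = ((2 : ℝ) ^ n - 1 + 2 ^ n * a) * prodC n := by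
    intro n hn
    induction n, hn using Nat.le_induction with
    | base =>
      intro a
      have hc : prodC 1 = 1 := by norm_num [prodC]
      rw [h1, hc]
      have : ((1 : Matrix (Fin (2^1)) (Fin (2^1)) ℝ) + a • allOnes 1).det =
          ((1 : Matrix (Fin 2) (Fin 2) ℝ) + a • Matrix.of (fun _ _ => (1:ℝ))).det := rfl
      rw [this, Matrix.det_fin_two]
      simp [Matrix.one_apply]
      ring
    | succ n hn ih =>
      intro a
      rw [hrec n hn, allOnes_succ n]
      have hre : (Matrix.reindex (blockEquiv n) (blockEquiv n))
            (Matrix.fromBlocks (allOnes n + S n) 0 0 (allOnes n + S n)) +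
          a • (Matrix.reindex (blockEquiv n) (blockEquiv n))
            (Matrix.fromBlocks (allOnes n) (allOnes n) (allOnes n) (allOnes n)) =
          (Matrix.reindex (blockEquiv n) (blockEquiv n))
            (Matrix.fromBlocks (allOnes n + S n) 0 0 (allOnes n + S n) +
              a • Matrix.fromBlocks (allOnes n) (allOnes n) (allOnes n) (allOnes n)) := by
        simp [Matrix.reindex_apply, Matrix.submatrix_add, Matrix.submatrix_smul]
      rw [hre, Matrix.det_reindex_self]
      have hb : Matrix.fromBlocks (allOnes n + S n) 0 0 (allOnes n + S n) +
          a • Matrix.fromBlocks (allOnes n) (allOnes n) (allOnes n) (allOnes n) =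
          Matrix.fromBlocks (allOnes n + S n + a • allOnes n) (a • allOnes n)
            (a • allOnes n) (allOnes n + S n + a • allOnes n) := by
        rw [Matrix.fromBlocks_smul, Matrix.fromBlocks_add]
        simp
      rw [hb, det_fromBlocks_sym]
      have e1 : allOnes n + S n + a • allOnes n - a • allOnes n = S n + (1 : ℝ) • allOnes n := by
        module
      have e2 : allOnes n + S n + a • allOnes n + a • allOnes n =
          S n + (1 + 2 * a) • allOnes n := by
        module
      rw [e1, e2, ih 1, ih (1 + 2 * a), prodC_succ]
      ring
  intro n hn
  have h := key n hn 0
  rw [zero_smul, add_zero] at h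
  rw [h]
  simp [prodC]
end

section
/- The eigenvalues of the matrix Σ_n (counted with multiplicity) are 2^n - 1 with multiplicity 1 and 2^{n-k} - 1 with multiplicity 2^k for k = 0, …, n-1. In particular Σ_n is positive definite and its largest eigenvalue is 2^n - 1, so the largest eigenvalue of Σ_n^{-1} is at most 1. -/
/-!
The column sums of `Σ_n` are all `2^n - 1`, so the all-ones row vector is a left eigenvector of
`charmatrix Σ_n`, and adding the rank-one matrix `J` moves only that eigenvalue, by `2^n`:
`(X - c) χ(J + A) = (X - c - N) χ(A)` when every column of `A` sums to `c`. As `Σ_{n+1}` is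
block diagonal with two copies of `J + Σ_n`, its characteristic polynomial is `χ(J + Σ_n)²`, and
the product formula follows by induction. All its roots lie in `[1, 2^n - 1]`; since `Σ_n` is
symmetric this gives positive definiteness, and the eigenvalues of `Σ_n⁻¹` are the inverses of
those of `Σ_n`.
-/

open Matrix Finset Polynomial

namespace Matrix

variable {n R : Type*} [Fintype n] [DecidableEq n] [CommRing R]

theorem X_sub_C_mul_charpoly_ones_add [Nonempty n] {A : Matrix n n R} {c : R}
    (hc : ∀ j, ∑ i, A i j = c) :
    (X - C c) * (of (fun _ _ => 1) + A).charpoly = (X - C (Fintype.card n + c)) * A.charpoly := by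
  set q : R[X] := X - C c
  set J : Matrix n n R := of fun _ _ => 1
  have hcol : J.map C * charmatrix A = q • J.map C := by
    ext i j
    simp [J, q, mul_apply, charmatrix_apply, Finset.sum_sub_distrib, diagonal_apply, ← map_sum, hc]
  have hshift : charmatrix (J + A) = charmatrix A - J.map C := by
    simp only [charmatrix, map_add, RingHom.mapMatrix_apply]
    abel
  have hscalar : charmatrix (J - scalar n (-c)) = q • 1 - J.map C := by
    ext i j
    by_cases h : i = j <;> simp [h, q, J]; ring
  -- `J - scalar n (-c) = J + c • 1` is a shift of the rank-one `J`, see `charpoly_vecMulVec`.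
  have hfactor : q • charmatrix (J + A) = charmatrix (J - scalar n (-c)) * charmatrix A := by
    rw [hshift, hscalar, sub_mul, hcol, smul_mul_assoc, one_mul, smul_sub]
  obtain ⟨m, hm⟩ : ∃ m, Fintype.card n = m + 1 := Nat.exists_eq_add_one.mpr Fintype.card_pos
  have hJ : J.charpoly = X ^ (m + 1) - (m + 1 : R[X]) * X ^ m := by
    have : J = vecMulVec 1 1 := by ext; simp [J, vecMulVec]
    rw [this, charpoly_vecMulVec, hm]
    simp [hm, smul_eq_C_mul]
  have key := congrArg det hfactor
  rw [det_smul, det_mul, ← charpoly, ← charpoly, ← charpoly, charpoly_sub_scalar, hJ, hm] at key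
  have hq : q ^ m * (q * (J + A).charpoly) =
      q ^ m * ((X - C (Fintype.card n + c)) * A.charpoly) := by
    rw [← mul_assoc, ← pow_succ, key, hm]
    simp only [sub_comp, mul_comp, pow_comp, X_comp, natCast_comp, add_comp, one_comp, q,
      map_add, map_neg, map_natCast, Nat.cast_add, Nat.cast_one, C_1, ← sub_eq_add_neg]
    ring
  exact ((monic_X_sub_C c).pow m).isRegular.left hq

theorem sum_col_reindex_fromBlocks_self {m p : Type*} [Fintype m] [Fintype p]
    (e : m ⊕ m ≃ p) {B : Matrix m m R} {c : R} (hB : ∀ j, ∑ i, B i j = c) (j : p) :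
    ∑ i, reindex e e (fromBlocks B 0 0 B) i j = c := by
  simp only [reindex_apply, submatrix_apply]
  rw [e.symm.sum_comp (fun i => fromBlocks B 0 0 B i (e.symm j))]
  rcases e.symm j with j | j <;> simp [Fintype.sum_sum_type, hB]

theorem IsHermitian.posDef_of_isRoot_charpoly_pos {A : Matrix n n ℝ} (hA : A.IsHermitian)
    (h : ∀ μ, A.charpoly.IsRoot μ → 0 < μ) : A.PosDef :=
  hA.posDef_iff_eigenvalues_pos.mpr fun i =>
    h _ (mem_spectrum_iff_isRoot_charpoly.mp (hA.eigenvalues_mem_spectrum_real i))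

variable {K : Type*} [Field K]

theorem isRoot_charpoly_of_hasEigenvalue {A : Matrix n n K} {μ : K}
    (h : Module.End.HasEigenvalue (toLin' A) μ) : A.charpoly.IsRoot μ := by
  simpa using (Module.End.hasEigenvalue_iff_isRoot_charpoly _ μ).mp h

theorem isRoot_charpoly_inv_of_hasEigenvalue_inv {A : Matrix n n K} (hA : IsUnit A) {μ : K}
    (h : Module.End.HasEigenvalue (toLin' A⁻¹) μ) : A.charpoly.IsRoot μ⁻¹ := by
  obtain ⟨u, rfl⟩ := hA
  have hμ : μ ∈ spectrum K (↑u⁻¹ : Matrix n n K) := by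
    rw [coe_units_inv, ← spectrum_toLin']
    exact Module.End.hasEigenvalue_iff_mem_spectrum.mp h
  rw [← spectrum.map_inv] at hμ
  exact mem_spectrum_iff_isRoot_charpoly.mp hμ

end Matrix

noncomputable def sigmaCharpolyTail (n : ℕ) : ℝ[X] :=
  ∏ k ∈ range n, (X - C ((2 : ℝ) ^ (n - k) - 1)) ^ 2 ^ k

theorem sigmaCharpolyTail_succ (n : ℕ) :
    sigmaCharpolyTail (n + 1) = (X - C ((2 : ℝ) ^ (n + 1) - 1)) * sigmaCharpolyTail n ^ 2 := by
  rw [sigmaCharpolyTail, prod_range_succ', sigmaCharpolyTail, ← prod_pow]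
  simp only [Nat.add_sub_add_right, pow_succ 2, pow_mul, Nat.sub_zero, pow_zero, pow_one]
  ring

theorem two_pow_sub_one_mem_Icc {m n : ℕ} (h1 : 1 ≤ m) (h2 : m ≤ n) :
    (2 : ℝ) ^ m - 1 ∈ Set.Icc 1 (2 ^ n - 1) := by
  have : (2 : ℝ) ^ 1 ≤ 2 ^ m := pow_le_pow_right₀ one_le_two h1
  have : (2 : ℝ) ^ m ≤ 2 ^ n := pow_le_pow_right₀ one_le_two h2
  constructor <;> linarith

theorem mem_Icc_of_isRoot_sigmaCharpoly {n : ℕ} (hn : 1 ≤ n) {μ : ℝ}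
    (h : ((X - C ((2 : ℝ) ^ n - 1)) * sigmaCharpolyTail n).IsRoot μ) :
    μ ∈ Set.Icc 1 (2 ^ n - 1) := by
  simp only [sigmaCharpolyTail, IsRoot, eval_mul, eval_prod, eval_pow, eval_sub, eval_X, eval_C,
    mul_eq_zero, prod_eq_zero_iff, pow_eq_zero_iff', mem_range, sub_eq_zero] at h
  rcases h with rfl | ⟨k, hk, rfl, -⟩
  · exact two_pow_sub_one_mem_Icc hn le_rfl
  · exact two_pow_sub_one_mem_Icc (by omega) (Nat.sub_le n k)

theorem allOnes_isHermitian (n : ℕ) : (allOnes n).IsHermitian := by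
  ext; simp [allOnes]

theorem sigma_isHermitian_sum_col_charpoly (S : ∀ n : ℕ, Matrix (Fin (2 ^ n)) (Fin (2 ^ n)) ℝ)
    (h1 : S 1 = 1)
    (hrec : ∀ n : ℕ, 1 ≤ n →
      S (n + 1) = (reindex (blockEquiv n) (blockEquiv n))
        (fromBlocks (allOnes n + S n) 0 0 (allOnes n + S n)))
    (n : ℕ) (hn : 1 ≤ n) :
    (S n).IsHermitian ∧ (∀ j, ∑ i, S n i j = 2 ^ n - 1) ∧
      (S n).charpoly = (X - C ((2 : ℝ) ^ n - 1)) * sigmaCharpolyTail n := by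
  induction n, hn using Nat.le_induction with
  | base =>
    refine ⟨h1 ▸ isHermitian_one, fun j => ?_, ?_⟩
    · norm_num [h1, one_apply]
    · rw [h1, charpoly_one, Fintype.card_fin, sigmaCharpolyTail, prod_range_one,
        show (2 : ℝ) ^ (1 - 0) - 1 = 1 by norm_num, C_1]
      ring
  | succ n hn ih =>
    obtain ⟨hherm, hcol, hcp⟩ := ih
    set B := allOnes n + S n
    have hBcol : ∀ j, ∑ i, B i j = 2 ^ (n + 1) - 1 := fun j => by
      simp only [B, Matrix.add_apply, sum_add_distrib, hcol, allOnes, of_apply, sum_const,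
        card_univ, Fintype.card_fin, nsmul_eq_mul, mul_one]
      push_cast
      ring
    have hkey : (X - C ((2 : ℝ) ^ n - 1)) * B.charpoly =
        (X - C ((2 : ℝ) ^ (n + 1) - 1)) * (S n).charpoly := by
      convert X_sub_C_mul_charpoly_ones_add hcol using 4
      · rfl
      · rw [Fintype.card_fin, Nat.cast_pow, Nat.cast_ofNat]
        ring
    have hBcp : B.charpoly = (X - C ((2 : ℝ) ^ (n + 1) - 1)) * sigmaCharpolyTail n :=
      mul_left_cancel₀ (X_sub_C_ne_zero ((2 : ℝ) ^ n - 1)) (by rw [hkey, hcp]; ring)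
    rw [hrec n hn]
    have hBherm : B.IsHermitian := (allOnes_isHermitian n).add hherm
    refine ⟨(hBherm.fromBlocks (by simp) hBherm).submatrix _,
      sum_col_reindex_fromBlocks_self _ hBcol, ?_⟩
    rw [charpoly_reindex, charpoly_fromBlocks_zero₂₁, hBcp, sigmaCharpolyTail_succ]
    ring

theorem stmt_4 (S : ∀ n : ℕ, Matrix (Fin (2 ^ n)) (Fin (2 ^ n)) ℝ)
    (h1 : S 1 = 1)
    (hrec : ∀ n : ℕ, 1 ≤ n →
      S (n + 1) = (Matrix.reindex (blockEquiv n) (blockEquiv n))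
        (Matrix.fromBlocks (allOnes n + S n) 0 0 (allOnes n + S n))) :
    ∀ n : ℕ, 1 ≤ n →
      -- the eigenvalues, with multiplicity, are `2^n - 1` (multiplicity 1) and
      -- `2^(n-k) - 1` with multiplicity `2^k`, `k = 0, …, n-1`:
      (S n).charpoly = (X - C ((2 : ℝ) ^ n - 1)) *
          ∏ k ∈ Finset.range n, (X - C ((2 : ℝ) ^ (n - k) - 1)) ^ (2 ^ k) ∧
      (S n).PosDef ∧
      (∀ μ : ℝ, Module.End.HasEigenvalue (Matrix.toLin' (S n)) μ → μ ≤ (2 : ℝ) ^ n - 1) ∧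
      (∀ μ : ℝ, Module.End.HasEigenvalue (Matrix.toLin' (S n)⁻¹) μ → μ ≤ 1) := by
  intro n hn
  obtain ⟨hherm, -, hcp⟩ := sigma_isHermitian_sum_col_charpoly S h1 hrec n hn
  have hroots : ∀ μ, (S n).charpoly.IsRoot μ → μ ∈ Set.Icc 1 (2 ^ n - 1) := fun μ h =>
    mem_Icc_of_isRoot_sigmaCharpoly hn (hcp ▸ h)
  have hpd : (S n).PosDef :=
    hherm.posDef_of_isRoot_charpoly_pos fun μ h => one_pos.trans_le (hroots μ h).1
  refine ⟨hcp, hpd, fun μ h => (hroots μ (isRoot_charpoly_of_hasEigenvalue h)).2, fun μ h => ?_⟩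
  have hμ := (hroots _ (isRoot_charpoly_inv_of_hasEigenvalue_inv hpd.isUnit h)).1
  exact (one_le_inv_iff₀.mp hμ).2
end
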